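/- arXiv:1201.4837 — 2 statements merged into one kernel-verified Lean document; each statement's English description precedes it below -/
import Mathlib

section
/- A positive semidefinite matrix a ∈ M_n(ℂ) is a finite sum of projections in M_n(ℂ) if and only if the trace of a is a nonnegative integer and tr(a) ≥ rank(a). -/
open Matrix ComplexOrder

/-- A matrix `a ∈ Mₙ(ℂ)` is a finite sum of projections (self-adjoint idempotents). -/
def Matrix.IsFiniteSumOfProjections {n : ℕ} (a : Matrix (Fin n) (Fin n) ℂ) : Prop :=
  ∃ (k : ℕ) (p : Fin k → Matrix (Fin n) (Fin n) ℂ),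
    (∀ i, (p i)ᴴ = p i ∧ p i * p i = p i) ∧ a = ∑ i, p i

/-!
Necessity: a projection has trace equal to its rank, and rank is subadditive.

Sufficiency, by induction on `m = tr a`: it is enough to split `a = u u* + b` with `u` a unit
vector and `b ⪰ 0` of trace `m - 1` and rank `≤ m - 1`. Diagonalize `a`; its eigenvalues `λ`
sum to `m` and at most `m` of them are nonzero, so some `λᵢ ≥ 1`. If fewer than `m` are nonzero,
or `λᵢ = 1`, take `u = eᵢ`. Otherwise the nonzero eigenvalues average exactly `1`, so some
`λⱼ < 1 < λᵢ`, and a unit vector `u = x eᵢ + y eⱼ` with `x² / λᵢ + y² / λⱼ = 1` makes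
`diag(λᵢ, λⱼ) - u u*` of rank one: the rank drops although no eigenvalue vanishes.
-/

open Finset

namespace Matrix

variable {ι K : Type*} [Fintype ι] [Field K]

theorem rank_add_le {m : Type*} (A B : Matrix m ι K) : (A + B).rank ≤ A.rank + B.rank := by
  rw [rank, rank, rank, mulVecLin_add]
  calc _ ≤ Module.finrank K ↥(LinearMap.range A.mulVecLin ⊔ LinearMap.range B.mulVecLin) :=
        Submodule.finrank_mono (LinearMap.range_add_le _ _)
    _ ≤ _ := Submodule.finrank_add_le_finrank_add_finrank _ _

theorem isStarProjection_vecMulVec_self_star {R : Type*} [CommSemiring R] [StarRing R]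
    {u : ι → R} (hu : star u ⬝ᵥ u = 1) : IsStarProjection (vecMulVec u (star u)) := by
  refine isStarProjection_iff'.mpr ⟨?_, ?_⟩
  · rw [vecMulVec_mul_vecMulVec, hu, one_smul]
  · rw [star_eq_conjTranspose, conjTranspose_vecMulVec, star_star]

variable [DecidableEq ι]

theorem rank_diagonal_le_card {w : ι → K} {s : Finset ι} (hw : ∀ i ∉ s, w i = 0) :
    (diagonal w).rank ≤ #s := by
  classical
  rw [rank_diagonal, Fintype.card_subtype]
  exact card_le_card fun i hi => by_contra fun his => (mem_filter.mp hi).2 (hw i his)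

theorem trace_eq_rank_of_isIdempotentElem {P : Matrix ι ι K} (hP : IsIdempotentElem P) :
    P.trace = P.rank := by
  have hf : IsIdempotentElem (toLin' P) := hP.map toLinAlgEquiv'
  rw [← trace_toLin'_eq, (LinearMap.IsIdempotentElem.isProj_range _ hf).trace, rank,
    ← toLin'_apply']

theorem exists_trace_eq_and_rank_le_of_mem_closure {A : Matrix ι ι K}
    (hA : A ∈ AddSubmonoid.closure {P | IsIdempotentElem P}) :
    ∃ m : ℕ, A.trace = m ∧ A.rank ≤ m := by
  induction hA using AddSubmonoid.closure_induction with
  | mem P hP => exact ⟨P.rank, trace_eq_rank_of_isIdempotentElem hP, le_rfl⟩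
  | zero => exact ⟨0, by simp, by simp⟩
  | add A B _ _ hA hB =>
    obtain ⟨m, hAm, hAr⟩ := hA
    obtain ⟨l, hBl, hBr⟩ := hB
    exact ⟨m + l, by rw [trace_add, hAm, hBl, Nat.cast_add],
      (rank_add_le A B).trans (add_le_add hAr hBr)⟩

theorem rank_conjStarAlgAut {R : Type*} [CommRing R] [StarRing R] (U : unitary (Matrix ι ι R))
    (A : Matrix ι ι R) : (Unitary.conjStarAlgAut R _ U A).rank = A.rank := by
  rw [Unitary.conjStarAlgAut_apply, ← Unitary.coe_star,
    rank_mul_eq_left_of_isUnit_det _ _ (UnitaryGroup.det_isUnit (star U)),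
    rank_mul_eq_right_of_isUnit_det _ _ (UnitaryGroup.det_isUnit U)]

variable {𝕜 : Type*} [RCLike 𝕜]

theorem exists_vecMulVec_add_vecMulVec_eq_diagonal {i j : ι} (hij : i ≠ j) {α β : ℝ}
    (hβ : 0 ≤ β) (hβ1 : β ≤ 1) (hα : 1 ≤ α) (hβα : β < α) :
    ∃ u v : ι → 𝕜, star u ⬝ᵥ u = 1 ∧
      diagonal (Pi.single i (α : 𝕜) + Pi.single j (β : 𝕜)) =
        vecMulVec u (star u) + vecMulVec v (star v) := by
  -- `u = (x, y)` and `v = (c, -t)`; `x² / α + y² / β = 1` is what makes `diag(α, β) - u uᵀ`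
  -- singular.
  obtain ⟨x, y, c, t, hxy, rfl, rfl, hxc⟩ : ∃ x y c t : ℝ,
      x ^ 2 + y ^ 2 = 1 ∧ x ^ 2 + c ^ 2 = α ∧ y ^ 2 + t ^ 2 = β ∧ x * y = c * t := by
    have hαβ : α - β ≠ 0 := by linarith
    have sq (r : ℝ) (hr : 0 ≤ r) : √r ^ 2 = r := Real.sq_sqrt hr
    refine ⟨√α * √(1 - β) / √(α - β), √β * √(α - 1) / √(α - β), √α * √(α - 1) / √(α - β),
      √β * √(1 - β) / √(α - β), ?_, ?_, ?_, by ring⟩ <;>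
    · simp only [div_pow, mul_pow, sq _ hβ, sq α (by linarith), sq (1 - β) (by linarith),
        sq (α - 1) (by linarith), sq (α - β) (by linarith)]
      field_simp
      ring
  refine ⟨Pi.single i (x : 𝕜) + Pi.single j (y : 𝕜), Pi.single i (c : 𝕜) - Pi.single j (t : 𝕜),
    ?_, ?_⟩
  · have : (x : 𝕜) * x + y * y = 1 := by exact_mod_cast (sq x ▸ sq y ▸ hxy)
    simpa [dotProduct_add, add_dotProduct, hij, hij.symm, RCLike.conj_ofReal] using this
  · have h₁ : (x : 𝕜) * y = c * t := by exact_mod_cast hxc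
    have h₂ : (y : 𝕜) * x = t * c := by rw [mul_comm, h₁, mul_comm]
    ext k l
    simp only [diagonal_apply, add_apply, vecMulVec_apply, Pi.add_apply, Pi.sub_apply,
      Pi.star_apply, Pi.single_apply, star_add, star_sub]
    split_ifs <;> simp_all [RCLike.conj_ofReal, sq]

theorem exists_isStarProjection_add_diagonal_of_one_le {d : ι → ℝ} (hd : 0 ≤ d) {k : ℕ}
    (hsum : ∑ l, d l = k + 1) {i : ι} (hi : 1 ≤ d i) {s : Finset ι} (hs : #s ≤ k)
    (hsupp : ∀ l ∉ s, d l = (Pi.single i 1 : ι → ℝ) l) :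
    ∃ p b : Matrix ι ι 𝕜, IsStarProjection p ∧ b.PosSemidef ∧ b.trace = k ∧ b.rank ≤ k ∧
      diagonal (fun l => (d l : 𝕜)) = p + b := by
  set e := d - Pi.single i 1
  have he : 0 ≤ e := fun l => by
    by_cases hl : l = i
    · subst hl; simpa [e] using hi
    · simpa [e, hl] using hd l
  refine ⟨vecMulVec (Pi.single i 1) (star (Pi.single i 1)), diagonal (fun l => (e l : 𝕜)),
    isStarProjection_vecMulVec_self_star (by simp), posSemidef_diagonal_iff.mpr fun l => ?_, ?_,
    (rank_diagonal_le_card fun l hl => by simp [e, hsupp l hl]).trans hs, ?_⟩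
  · exact_mod_cast he l
  · have : ∑ l, e l = k := by simp [e, sum_sub_distrib, hsum]
    simp [trace_diagonal, ← RCLike.ofReal_sum, this]
  · ext a b
    simp only [diagonal_apply, add_apply, vecMulVec_apply, Pi.star_apply, Pi.single_apply, e,
      Pi.sub_apply]
    split_ifs <;> simp_all

theorem exists_isStarProjection_add_diagonal_of_le_one_le {d : ι → ℝ} (hd : 0 ≤ d) {k : ℕ}
    (hsum : ∑ l, d l = k + 1) {s : Finset ι} (hs : #s ≤ k + 1) (hsupp : ∀ l ∉ s, d l = 0)
    {i j : ι} (hi : i ∈ s) (hj : j ∈ s) (hij : i ≠ j) (hdi : 1 ≤ d i) (hdj : d j ≤ 1)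
    (hdji : d j < d i) :
    ∃ p b : Matrix ι ι 𝕜, IsStarProjection p ∧ b.PosSemidef ∧ b.trace = k ∧ b.rank ≤ k ∧
      diagonal (fun l => (d l : 𝕜)) = p + b := by
  obtain ⟨u, v, hu, huv⟩ :=
    exists_vecMulVec_add_vecMulVec_eq_diagonal (𝕜 := 𝕜) hij (hd j) hdj hdi hdji
  set e := d - Pi.single i (d i) - Pi.single j (d j)
  have he (l : ι) : e l = if l = i ∨ l = j then 0 else d l := by
    simp only [e, Pi.sub_apply, Pi.single_apply]
    split_ifs <;> simp_all
  have hv : (vecMulVec v (star v)).trace = d i + d j - 1 := by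
    have := congrArg trace huv
    rw [trace_add, trace_vecMulVec u, dotProduct_comm, hu] at this
    simp [trace_diagonal, sum_add_distrib] at this
    rw [trace_vecMulVec]
    linear_combination -this
  refine ⟨vecMulVec u (star u), vecMulVec v (star v) + diagonal (fun l => (e l : 𝕜)),
    isStarProjection_vecMulVec_self_star hu,
    (posSemidef_vecMulVec_self_star v).add (posSemidef_diagonal_iff.mpr fun l => ?_), ?_, ?_, ?_⟩
  · have : 0 ≤ e l := by rw [he]; split_ifs; exacts [le_rfl, hd l]
    exact_mod_cast this
  · have : ∑ l, e l = k + 1 - d i - d j := by simp [e, sum_sub_distrib, hsum]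
    rw [trace_add, hv, trace_diagonal, ← RCLike.ofReal_sum, this]
    push_cast; ring
  · have hcard : #((s.erase i).erase j) + 2 = #s := by
      have hj' : j ∈ s.erase i := mem_erase.mpr ⟨hij.symm, hj⟩
      have := card_pos.mpr ⟨j, hj'⟩
      rw [card_erase_of_mem hj', card_erase_of_mem hi] at *
      omega
    calc _ ≤ (vecMulVec v (star v)).rank + (diagonal (fun l => (e l : 𝕜))).rank := rank_add_le _ _
      _ ≤ 1 + #((s.erase i).erase j) := add_le_add (rank_vecMulVec_le _ _) (rank_diagonal_le_card
          fun l hl => by rw [he]; split_ifs <;> simp_all)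
      _ ≤ k := by omega
  · rw [← add_assoc, ← huv, diagonal_add]
    congr 1
    funext l
    rw [he]
    simp only [Pi.add_apply, Pi.single_apply]
    split_ifs <;> simp_all

theorem exists_isStarProjection_add_diagonal {d : ι → ℝ} (hd : 0 ≤ d) {k : ℕ}
    (hsum : ∑ l, d l = k + 1) (hsupp : #{l | d l ≠ 0} ≤ k + 1) :
    ∃ p b : Matrix ι ι 𝕜, IsStarProjection p ∧ b.PosSemidef ∧ b.trace = k ∧ b.rank ≤ k ∧
      diagonal (fun l => (d l : 𝕜)) = p + b := by
  set s : Finset ι := {l | d l ≠ 0}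
  have hd_s (l : ι) (hl : l ∉ s) : d l = 0 := by simpa [s] using hl
  have hsum_s : ∑ l ∈ s, d l = k + 1 := by rw [sum_filter_ne_zero, hsum]
  obtain ⟨i, hi, hdi⟩ : ∃ i ∈ s, 1 ≤ d i := by
    refine exists_le_of_sum_le (nonempty_of_sum_ne_zero (by rw [hsum_s]; positivity)) ?_
    rw [hsum_s, sum_const, nsmul_one]
    exact_mod_cast hsupp
  by_cases hcase : #s ≤ k ∨ d i = 1
  · rcases hcase with hs | hdi1
    · refine exists_isStarProjection_add_diagonal_of_one_le hd hsum hdi hs fun l hl => ?_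
      rw [hd_s l hl, Pi.single_eq_of_ne (ne_of_mem_of_not_mem hi hl).symm]
    · refine exists_isStarProjection_add_diagonal_of_one_le hd hsum hdi (s := s.erase i)
        (by rw [card_erase_of_mem hi]; omega) fun l hl => ?_
      by_cases hli : l = i
      · simp [hli, hdi1]
      · rw [hd_s l (fun h => hl (mem_erase.mpr ⟨hli, h⟩)), Pi.single_eq_of_ne hli]
  · push Not at hcase
    have hdi1 : 1 < d i := lt_of_le_of_ne hdi hcase.2.symm
    obtain ⟨j, hj, hdj⟩ : ∃ j ∈ s.erase i, d j < 1 := by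
      refine exists_lt_of_sum_lt ?_
      rw [sum_erase_eq_sub hi, hsum_s, sum_const, card_erase_of_mem hi,
        show #s - 1 = k by omega, nsmul_one]
      linarith
    exact exists_isStarProjection_add_diagonal_of_le_one_le hd hsum hsupp hd_s hi
      (mem_of_mem_erase hj) (ne_of_mem_erase hj).symm hdi hdj.le (by linarith)

theorem PosSemidef.exists_isStarProjection_add {a : Matrix ι ι 𝕜} (ha : a.PosSemidef) {k : ℕ}
    (htr : a.trace = k + 1) (hrk : a.rank ≤ k + 1) :
    ∃ p b : Matrix ι ι 𝕜, IsStarProjection p ∧ b.PosSemidef ∧ b.trace = k ∧ b.rank ≤ k ∧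
      a = p + b := by
  have hsum : ∑ l, ha.1.eigenvalues l = k + 1 := by
    have := ha.1.trace_eq_sum_eigenvalues
    rw [htr] at this
    exact_mod_cast this.symm
  have hsupp : #{l | ha.1.eigenvalues l ≠ 0} ≤ k + 1 := by
    rwa [ha.1.rank_eq_card_non_zero_eigs, Fintype.card_subtype] at hrk
  obtain ⟨p, b, hp, hb, hbtr, hbrk, hpb⟩ :=
    exists_isStarProjection_add_diagonal (𝕜 := 𝕜) ha.eigenvalues_nonneg hsum hsupp
  set U := ha.1.eigenvectorUnitary
  set f := Unitary.conjStarAlgAut 𝕜 _ U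
  refine ⟨f p, f b, hp.map f, ?_, (trace_map' f b).trans hbtr,
    (rank_conjStarAlgAut U b).trans_le hbrk, ?_⟩
  · rw [Unitary.conjStarAlgAut_apply, star_eq_conjTranspose]
    exact hb.mul_mul_conjTranspose_same _
  · rw [← map_add, ← hpb]
    exact ha.1.spectral_theorem

theorem PosSemidef.mem_closure_isStarProjection {a : Matrix ι ι 𝕜} (ha : a.PosSemidef) {k : ℕ}
    (htr : a.trace = k) (hrk : a.rank ≤ k) :
    a ∈ AddSubmonoid.closure {p | IsStarProjection p} := by
  induction k generalizing a with
  | zero =>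
    rw [ha.trace_eq_zero_iff.mp (by simpa using htr)]
    exact zero_mem _
  | succ k ih =>
    obtain ⟨p, b, hp, hb, hbtr, hbrk, rfl⟩ :=
      ha.exists_isStarProjection_add (by simpa using htr) hrk
    exact add_mem (AddSubmonoid.subset_closure hp) (ih hb hbtr hbrk)

end Matrix

theorem Matrix.isFiniteSumOfProjections_iff_mem_closure {n : ℕ} {a : Matrix (Fin n) (Fin n) ℂ} :
    a.IsFiniteSumOfProjections ↔ a ∈ AddSubmonoid.closure {p | IsStarProjection p} := by
  have proj_iff (p : Matrix (Fin n) (Fin n) ℂ) : IsStarProjection p ↔ pᴴ = p ∧ p * p = p := by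
    rw [isStarProjection_iff', star_eq_conjTranspose, and_comm]
  constructor
  · rintro ⟨k, p, hp, rfl⟩
    exact AddSubmonoid.sum_mem _ fun i _ => AddSubmonoid.subset_closure ((proj_iff _).mpr (hp i))
  · intro h
    induction h using AddSubmonoid.closure_induction with
    | mem p hp => exact ⟨1, fun _ => p, fun _ => (proj_iff p).mp hp, by simp⟩
    | zero => exact ⟨0, Fin.elim0, Fin.rec0, by simp⟩
    | add a b _ _ ha hb =>
      obtain ⟨k, p, hp, rfl⟩ := ha
      obtain ⟨l, q, hq, rfl⟩ := hb
      exact ⟨k + l, Fin.append p q, Fin.addCases (by simpa using hp) (by simpa using hq),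
        by simp [Fin.sum_univ_add]⟩

theorem posSemidef_finite_sum_of_projections_iff
    {n : ℕ} (a : Matrix (Fin n) (Fin n) ℂ) (ha : a.PosSemidef) :
    a.IsFiniteSumOfProjections ↔ ∃ m : ℕ, a.trace = (m : ℂ) ∧ a.rank ≤ m := by
  rw [isFiniteSumOfProjections_iff_mem_closure]
  refine ⟨fun h => exists_trace_eq_and_rank_le_of_mem_closure ?_,
    fun ⟨m, htr, hrk⟩ => ha.mem_closure_isStarProjection htr hrk⟩
  exact AddSubmonoid.closure_mono (fun p hp => hp.isIdempotentElem) h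
end

section
/- For every real number γ ∈ [3/2, 3], the diagonal matrix diag(2γ−3, 3−γ, 3−γ) ∈ M_3(ℂ) is the sum of three projections in M_3(ℂ). -/
/-!
If `ω` is a primitive `m`-th root of unity and `c ∈ ℝᵐ`, the vectors `vₖ = (cᵢ ωⁱᵏ)ᵢ` satisfy
`∑ₖ vₖ vₖ* = m · diag(cᵢ²)` by orthogonality of the characters of `ℤ/m`, and each `vₖ` is a unit
vector once `∑ cᵢ² = 1`. With `cᵢ = √(dᵢ / m)` this writes every nonnegative diagonal matrix of
trace `m` as a sum of `m` rank-one projections; `diag(2γ - 3, 3 - γ, 3 - γ)` has trace `3`.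
-/

open Matrix ComplexConjugate

section

variable {m : ℕ}

lemma isStarProjection_vecMulVec_star {n R : Type*} [Fintype n] [CommSemiring R] [StarRing R]
    {v : n → R} (hv : star v ⬝ᵥ v = 1) : IsStarProjection (vecMulVec v (star v)) where
  isIdempotentElem := by
    rw [IsIdempotentElem, vecMulVec_mul_vecMulVec, hv, one_smul]
  isSelfAdjoint := by
    rw [IsSelfAdjoint, star_eq_conjTranspose, conjTranspose_vecMulVec, star_star]

lemma IsPrimitiveRoot.sum_pow_mul_conj_pow {ω : ℂ} (hω : IsPrimitiveRoot ω m)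
    (i j : Fin m) :
    ∑ k : Fin m, ω ^ (i * k : ℕ) * conj (ω ^ (j * k : ℕ)) = if i = j then (m : ℂ) else 0 := by
  have hm : m ≠ 0 := (Fin.pos i).ne'
  have hnorm : ∀ l : ℕ, ‖ω ^ l‖ = 1 := fun l => by rw [norm_pow, hω.norm'_eq_one hm, one_pow]
  set ζ := ω ^ (i : ℕ) * conj (ω ^ (j : ℕ)) with hζ
  have hterm : ∀ k : Fin m, ω ^ (i * k : ℕ) * conj (ω ^ (j * k : ℕ)) = ζ ^ (k : ℕ) := fun k => by
    rw [hζ, mul_pow, pow_mul, pow_mul, map_pow]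
  simp_rw [hterm, Fin.sum_univ_eq_sum_range (ζ ^ ·)]
  split_ifs with hij
  · have hζ1 : ζ = 1 := by
      rw [hζ, hij, Complex.mul_conj, Complex.normSq_eq_norm_sq, hnorm]; norm_num
    simp [hζ1]
  · have hζ1 : ζ ≠ 1 := by
      rw [hζ, ← Complex.inv_eq_conj (hnorm _), Ne, mul_inv_eq_one₀ (pow_ne_zero _ (hω.ne_zero hm))]
      exact fun h => hij (Fin.ext (hω.pow_inj i.is_lt j.is_lt h))
    have hζm : ζ ^ m = 1 := by
      rw [hζ, mul_pow, ← pow_mul, ← map_pow, ← pow_mul, mul_comm (i : ℕ), mul_comm (j : ℕ),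
        pow_mul, pow_mul, hω.pow_eq_one]; simp
    rw [geom_sum_eq hζ1, hζm, sub_self, zero_div]

def rootOfUnityTwist (ω : ℂ) (c : Fin m → ℝ) (k : Fin m) : Fin m → ℂ :=
  fun i => c i * ω ^ (i * k : ℕ)

lemma star_rootOfUnityTwist_dotProduct {ω : ℂ} (hω : ‖ω‖ = 1) (c : Fin m → ℝ)
    (k : Fin m) :
    star (rootOfUnityTwist ω c k) ⬝ᵥ rootOfUnityTwist ω c k = ((∑ i, c i ^ 2 : ℝ) : ℂ) := by
  simp only [dotProduct, rootOfUnityTwist, Pi.star_apply, star_mul', Complex.star_def,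
    Complex.conj_ofReal, Complex.ofReal_sum, Complex.ofReal_pow]
  refine Finset.sum_congr rfl fun i _ => ?_
  have hunit : conj (ω ^ (i * k : ℕ)) * ω ^ (i * k : ℕ) = 1 := by
    rw [mul_comm, Complex.mul_conj, Complex.normSq_eq_norm_sq, norm_pow, hω]; simp
  linear_combination (c i : ℂ) ^ 2 * hunit

lemma sum_vecMulVec_rootOfUnityTwist {ω : ℂ} (hω : IsPrimitiveRoot ω m)
    (c : Fin m → ℝ) :
    ∑ k, vecMulVec (rootOfUnityTwist ω c k) (star (rootOfUnityTwist ω c k))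
      = diagonal fun i => ((m * c i ^ 2 : ℝ) : ℂ) := by
  ext i j
  have horth := hω.sum_pow_mul_conj_pow i j
  simp only [Matrix.sum_apply, vecMulVec_apply, rootOfUnityTwist, Pi.star_apply, star_mul',
    Complex.star_def, Complex.conj_ofReal, diagonal_apply]
  calc _ = c i * c j * ∑ k : Fin m, ω ^ (i * k : ℕ) * conj (ω ^ (j * k : ℕ)) := by
        rw [Finset.mul_sum]; exact Finset.sum_congr rfl fun k _ => by ring
    _ = _ := by rw [horth]; split_ifs with h <;> simp [h]; ring

theorem exists_diagonal_eq_sum_isStarProjection [NeZero m] (d : Fin m → ℝ)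
    (hd : ∀ i, 0 ≤ d i) (htr : ∑ i, d i = m) :
    ∃ p : Fin m → Matrix (Fin m) (Fin m) ℂ,
      (∀ k, IsStarProjection (p k)) ∧ diagonal (fun i => (d i : ℂ)) = ∑ k, p k := by
  obtain ⟨ω, hω⟩ : ∃ ω : ℂ, IsPrimitiveRoot ω m := ⟨_, Complex.isPrimitiveRoot_exp m (NeZero.ne m)⟩
  set c : Fin m → ℝ := fun i => √(d i / m)
  have hc : ∀ i, c i ^ 2 = d i / m := fun i => Real.sq_sqrt (div_nonneg (hd i) m.cast_nonneg)
  have hm : (m : ℝ) ≠ 0 := Nat.cast_ne_zero.mpr (NeZero.ne m)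
  refine ⟨fun k => vecMulVec (rootOfUnityTwist ω c k) (star (rootOfUnityTwist ω c k)),
    fun k => isStarProjection_vecMulVec_star ?_, ?_⟩
  · rw [star_rootOfUnityTwist_dotProduct (hω.norm'_eq_one (NeZero.ne m)), Finset.sum_congr rfl
      fun i _ => hc i, ← Finset.sum_div, htr, div_self hm, Complex.ofReal_one]
  · rw [sum_vecMulVec_rootOfUnityTwist hω]
    simp only [hc, mul_div_cancel₀ _ hm]

end

theorem diagonal_sum_of_three_projections
    (γ : ℝ) (hγ : γ ∈ Set.Icc (3/2 : ℝ) 3) :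
    ∃ p₁ p₂ p₃ : Matrix (Fin 3) (Fin 3) ℂ,
      (p₁ᴴ = p₁ ∧ p₁ * p₁ = p₁) ∧ (p₂ᴴ = p₂ ∧ p₂ * p₂ = p₂) ∧
      (p₃ᴴ = p₃ ∧ p₃ * p₃ = p₃) ∧
      Matrix.diagonal ![(2 * γ - 3 : ℂ), (3 - γ : ℂ), (3 - γ : ℂ)] = p₁ + p₂ + p₃ := by
  obtain ⟨hγ₁, hγ₂⟩ := hγ
  have hd : ∀ i, 0 ≤ ![2 * γ - 3, 3 - γ, 3 - γ] i := by
    intro i; fin_cases i <;> simp <;> linarith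
  have htr : ∑ i, ![2 * γ - 3, 3 - γ, 3 - γ] i = (3 : ℕ) := by
    simp only [Fin.sum_univ_three]; push_cast; ring
  obtain ⟨p, hp, hsum⟩ := exists_diagonal_eq_sum_isStarProjection _ hd htr
  have hproj : ∀ k, (p k)ᴴ = p k ∧ p k * p k = p k := fun k =>
    ⟨(hp k).isSelfAdjoint, (hp k).isIdempotentElem⟩
  refine ⟨p 0, p 1, p 2, hproj 0, hproj 1, hproj 2, ?_⟩
  rw [← Fin.sum_univ_three, ← hsum]
  congr 1
  ext i; fin_cases i <;> simp
end
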